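/- arXiv:1610.08947 — 7 statements merged into one kernel-verified Lean document; each statement's English description precedes it below -/
import Mathlib

section
/- For every integer p ≥ 2 (working in ℚ[y] or ℂ[y]), the polynomials U_p(y) − U_{p−1}(y) and U_{p−2}(y) − U_{p−3}(y) are coprime, i.e. their gcd is 1. -/
/-!
Write `V n = U n - U (n - 1)`. These satisfy the Chebyshev recurrence
`V (n + 1) = 2 X V n - V (n - 1)`, so, as in the Euclidean algorithm, consecutive ones are
coprime because `V 0 = 1`. Moreover `V n (0) = ±1`, so
`X` is coprime to every `V n`. Since `V n + V (n - 2) = 2 X V (n - 1)`, coprimality of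
`V n` and `V (n - 2)` reduces to coprimality of `V n` with `2`, `X` and `V (n - 1)`.
-/

open Polynomial Polynomial.Chebyshev

namespace Polynomial

theorem isCoprime_X_of_isUnit_eval_zero {R : Type*} [CommRing R] {p : R[X]}
    (h : IsUnit (p.eval 0)) : IsCoprime X p := by
  rw [← X_mul_divX_add p, IsCoprime.mul_add_left_right_iff, coeff_zero_eq_eval_zero]
  exact isCoprime_one_right.of_isCoprime_of_dvd_right (h.map C).dvd

namespace Chebyshev

variable (R : Type*) [CommRing R]

/-- The Chebyshev polynomials of the third kind. -/
noncomputable def V (n : ℤ) : R[X] := U R n - U R (n - 1)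

variable {R}

theorem V_zero : V R 0 = 1 := by simp [V, U_neg_one]

theorem V_add_one (n : ℤ) : V R (n + 1) = 2 * X * V R n - V R (n - 1) := by
  simp only [V, add_sub_cancel_right, sub_sub, one_add_one_eq_two]
  linear_combination U_add_one R n - U_eq R n

theorem V_sub_two (n : ℤ) : V R (n - 2) = 2 * X * V R (n - 1) - V R n := by
  have h := V_add_one (R := R) (n - 1)
  rw [sub_add_cancel, sub_sub, one_add_one_eq_two] at h
  linear_combination h

theorem isUnit_V_eval_zero (n : ℤ) : IsUnit ((V R n).eval 0) := by
  have hunit (k : ℤ) : IsUnit ((k.negOnePow : ℤ) : R) :=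
    k.negOnePow.isUnit.map (Int.castRingHom R)
  rcases Int.even_or_odd n with hn | hn
  · rw [V, eval_sub, U_eval_zero_of_even R hn, U_eval_zero_of_odd R (hn.sub_odd odd_one), sub_zero]
    exact hunit _
  · rw [V, eval_sub, U_eval_zero_of_odd R hn, U_eval_zero_of_even R (hn.sub_odd odd_one), zero_sub]
    exact (hunit _).neg

theorem isCoprime_V_add_one_iff (n : ℤ) :
    IsCoprime (V R (n + 1)) (V R n) ↔ IsCoprime (V R n) (V R (n - 1)) := by
  rw [V_add_one, IsCoprime.mul_sub_right_left_iff, isCoprime_comm]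

theorem isCoprime_V_V_sub_one (n : ℤ) : IsCoprime (V R n) (V R (n - 1)) := by
  induction n using Int.induction_on with
  | zero => simp [V_zero, isCoprime_one_left]
  | succ k ih => simpa using (isCoprime_V_add_one_iff (k : ℤ)).mpr ih
  | pred k ih => simpa using (isCoprime_V_add_one_iff (-(k : ℤ) - 1)).mp (by simpa using ih)

theorem isCoprime_V_V_sub_two (h2 : IsUnit (2 : R)) (n : ℤ) :
    IsCoprime (V R n) (V R (n - 2)) := by
  have h2' : IsUnit (2 : R[X]) := by
    rw [← map_ofNat Polynomial.C 2]
    exact h2.map _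
  rw [V_sub_two, sub_eq_add_neg, ← mul_neg_one (V R n), IsCoprime.add_mul_left_right_iff,
    mul_assoc, isCoprime_mul_unit_left_right h2']
  exact (isCoprime_X_of_isUnit_eval_zero (isUnit_V_eval_zero n)).symm.mul_right
    (isCoprime_V_V_sub_one n)

end Chebyshev

end Polynomial

theorem chebyshev_U_sub_U_coprime_general (p : ℤ) :
    IsCoprime (U ℚ p - U ℚ (p - 1)) (U ℚ (p - 2) - U ℚ (p - 3)) := by
  have h := isCoprime_V_V_sub_two (R := ℚ) (isUnit_of_invertible 2) p
  rwa [V, V, sub_sub, show (2 : ℤ) + 1 = 3 by norm_num] at h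

/-- For every integer `p ≥ 2`, the polynomials `U_p − U_{p−1}` and `U_{p−2} − U_{p−3}`
are coprime in `ℚ[y]`. -/
theorem chebyshev_U_sub_U_coprime (p : ℤ) (hp : 2 ≤ p) :
    IsCoprime (U ℚ p - U ℚ (p - 1)) (U ℚ (p - 2) - U ℚ (p - 3)) :=
  chebyshev_U_sub_U_coprime_general p
end

section
/- For every integer p ≥ 1, the polynomials T_{2p}(y) and y·T_{2p+1}(y) are coprime in ℚ[y] (equivalently ℂ[y]). -/
open Polynomial Polynomial.Chebyshev

/-!
Since `T (n + 1) = 2 X T n - T (n - 1)`, Euclid's algorithm links any two consecutive Chebyshev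
polynomials back to `T 0 = 1`, so they are coprime. Moreover `T (2 p)` takes the unit value
`(-1) ^ p` at `0`, so it is coprime to `X` as well.
-/

theorem Polynomial.isCoprime_X_of_isUnit_eval_zero_s4 {R : Type*} [CommRing R] {p : R[X]}
    (hp : IsUnit (p.eval 0)) : IsCoprime X p := by
  obtain ⟨q, hq⟩ := X_dvd_sub_C (p := p)
  have hp_eq : p = C (p.eval 0) + X * q := by
    rw [← coeff_zero_eq_eval_zero, ← hq, add_sub_cancel]
  rw [hp_eq, IsCoprime.add_mul_left_right_iff]
  simpa using (isCoprime_mul_unit_left_right (isUnit_C.mpr hp) X 1).mpr isCoprime_one_right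

namespace Polynomial.Chebyshev

variable (R : Type*) [CommRing R]

theorem isCoprime_T_T_add_one (n : ℤ) : IsCoprime (T R n) (T R (n + 1)) := by
  induction n using Int.induction_on with
  | zero => simpa using isCoprime_one_left
  | succ n ih =>
    rw [T_add_one R (n + 1), add_sub_cancel_right, sub_eq_neg_add,
      IsCoprime.add_mul_right_right_iff, IsCoprime.neg_right_iff]
    exact ih.symm
  | pred n ih =>
    rw [sub_add_cancel, T_sub_one R (-n), sub_eq_neg_add,
      IsCoprime.add_mul_right_left_iff, IsCoprime.neg_left_iff]
    exact ih.symm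

theorem isCoprime_X_T_two_mul (p : ℤ) : IsCoprime X (T R (2 * p)) := by
  apply isCoprime_X_of_isUnit_eval_zero_s4
  rw [T_eval_zero_of_even R (even_two_mul p)]
  exact (Units.isUnit _).map (Int.castRingHom R)

end Polynomial.Chebyshev

theorem chebyshev_T_coprime_X_mul_T_general (p : ℤ) :
    IsCoprime (T ℚ (2 * p)) ((X : ℚ[X]) * T ℚ (2 * p + 1)) :=
  (isCoprime_X_T_two_mul ℚ p).symm.mul_right (isCoprime_T_T_add_one ℚ (2 * p))

/-- For every integer `p ≥ 1`, `T_{2p}(y)` and `y·T_{2p+1}(y)` are coprime in `ℚ[y]`. -/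
theorem chebyshev_T_coprime_X_mul_T (p : ℤ) (hp : 1 ≤ p) :
    IsCoprime (T ℚ (2 * p)) ((X : ℚ[X]) * T ℚ (2 * p + 1)) :=
  chebyshev_T_coprime_X_mul_T_general p
end

section
/- (1−y²)·U_{2p}(y)²·(1−y²)·U_{2p−1}(y)² − 1 = T_{2p}(y)²·T_{2p+1}(y)² − T_{2p}(y)² − T_{2p+1}(y)² as an identity in ℤ[y], for all p ≥ 1. -/
open Polynomial Polynomial.Chebyshev

lemma pell_cheb (n : ℤ) :
    (T ℤ n) ^ 2 + (1 - (X : ℤ[X]) ^ 2) * (U ℤ (n - 1)) ^ 2 = 1 := by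
  induction n using Polynomial.Chebyshev.induct with
  | zero => simp [T_zero, U_neg_one]
  | one => simp [T_one, U_zero]
  | add_two n ih1 ih2 =>
      have h1 := T_eq_X_mul_T_sub_pol_U ℤ n
      have h2 := U_eq_X_mul_U_add_T ℤ n
      have h1' : (n : ℤ) + 2 - 1 = n + 1 := by ring
      have h2' : (n : ℤ) + 1 - 1 = n := by ring
      rw [h1', h1] at *
      rw [h2'] at ih1
      rw [show U ℤ (n + 1) = X * U ℤ n + T ℤ (n + 1) from h2]
      linear_combination ih1
  | neg_add_one n ih1 ih2 =>
      have h1 := T_eq_X_mul_T_sub_pol_U ℤ (-(n:ℤ) - 1)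
      have h2 := U_eq_X_mul_U_add_T ℤ (-(n:ℤ) - 2)
      have e1 : -(n:ℤ) - 1 + 2 = -n + 1 := by ring
      have e2 : -(n:ℤ) - 1 + 1 = -n := by ring
      have e3 : -(n:ℤ) - 2 + 1 = -n - 1 := by ring
      have e4 : -(n:ℤ) + 1 - 1 = -n := by ring
      have e5 : -(n:ℤ) - 1 - 1 = -n - 2 := by ring
      rw [e1, e2] at h1
      rw [e3] at h2
      rw [e4] at ih2
      rw [e5]
      have hT : T ℤ (-(n:ℤ) - 1)
          = X * T ℤ (-(n:ℤ)) + (1 - (X:ℤ[X]) ^ 2) * U ℤ (-(n:ℤ) - 1) := by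
        have t1 := T_sub_one ℤ (-(n:ℤ))
        linear_combination t1 - h1
      have h2'' := U_eq_X_mul_U_add_T ℤ (-(n:ℤ) - 1)
      have e6 : -(n:ℤ) - 1 + 1 = -n := by ring
      rw [e6] at h2''
      have hU : U ℤ (-(n:ℤ) - 2)
          = X * U ℤ (-(n:ℤ) - 1) - T ℤ (-(n:ℤ)) := by
        have u1 := U_sub_one ℤ (-(n:ℤ) - 1)
        have e7 : -(n:ℤ) - 1 - 1 = -n - 2 := by ring
        rw [e7, e6] at u1
        linear_combination u1 - h2''
      rw [hT, hU]
      linear_combination ih1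

/-- For all `p ≥ 1`, in `ℤ[y]`:
`(1−y²)·U_{2p}(y)²·(1−y²)·U_{2p−1}(y)² − 1 = T_{2p}²·T_{2p+1}² − T_{2p}² − T_{2p+1}²`. -/
theorem chebyshev_product_identity (p : ℤ) (hp : 1 ≤ p) :
    (1 - (X : ℤ[X]) ^ 2) * (U ℤ (2 * p)) ^ 2 * ((1 - (X : ℤ[X]) ^ 2) * (U ℤ (2 * p - 1)) ^ 2) - 1
      = (T ℤ (2 * p)) ^ 2 * (T ℤ (2 * p + 1)) ^ 2 - (T ℤ (2 * p)) ^ 2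
        - (T ℤ (2 * p + 1)) ^ 2 := by
  have h1 := pell_cheb (2 * p)
  have h2 := pell_cheb (2 * p + 1)
  have e : 2 * p + 1 - 1 = 2 * p := by ring
  rw [e] at h2
  linear_combination ((1 - (X:ℤ[X])^2)*(U ℤ (2*p))^2) * h1 + (1 - (T ℤ (2*p))^2) * h2
end

section
/- Let r, s be coprime positive integers with r·s even, and let k, n be integers with −r·k + s·n = 1. Define N(t) = (k + t·s)·(n + t·r) for t ∈ ℤ. Then the subgroup of ℤ (equivalently, the ideal) generated by the set {N(t) : t ∈ ℤ} is all of ℤ. -/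
/-- Let `r, s` be coprime positive integers with `r·s` even, and `−r·k + s·n = 1`.
Then the ideal of `ℤ` generated by the values `N(t) = (k+ts)(n+tr)` is all of `ℤ`. -/
theorem ideal_span_N_eq_top (r s k n : ℤ) (hr : 0 < r) (hs : 0 < s)
    (hco : IsCoprime r s) (heven : 2 ∣ r * s) (h : -r * k + s * n = 1) :
    Ideal.span {m : ℤ | ∃ t : ℤ, m = (k + t * s) * (n + t * r)} = ⊤ := by
  set I := Ideal.span {m : ℤ | ∃ t : ℤ, m = (k + t * s) * (n + t * r)} with hI
  have hmem : ∀ t : ℤ, (k + t * s) * (n + t * r) ∈ I := fun t =>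
    Ideal.subset_span ⟨t, rfl⟩
  set N0 := (k + 0 * s) * (n + 0 * r) with hN0
  set N1 := (k + 1 * s) * (n + 1 * r) with hN1
  set Nm := (k + (-1) * s) * (n + (-1) * r) with hNm
  have h4 : (4 : ℤ) ∈ I := by
    have heq : (4 : ℤ) = (16 * N0 - 8 * N1 - 8 * Nm) * N0 + (N1 - 2 * Nm) * N1 + Nm * Nm := by
      simp only [hN0, hN1, hNm]
      linear_combination (-4 * (-r * k + s * n) - 4) * h
    rw [heq]
    exact I.add_mem (I.add_mem (I.mul_mem_left _ (hmem 0)) (I.mul_mem_left _ (hmem 1)))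
      (I.mul_mem_left _ (hmem (-1)))
  -- find an odd element of I
  have hodd : ∃ m ∈ I, Odd m := by
    rcases (Int.prime_two.dvd_mul.mp heven) with hd | hd
    · obtain ⟨r', hr'⟩ := hd
      have hsn : Odd (s * n) := ⟨r' * k, by linear_combination h + k * hr'⟩
      obtain ⟨hso, hno⟩ := Int.odd_mul.mp hsn
      obtain ⟨s', hs'⟩ := hso
      obtain ⟨n', hn'⟩ := hno
      refine ⟨_, hmem (k + 1), ?_⟩
      exact Odd.mul ⟨k + s' * (k + 1), by rw [hs']; ring⟩
        ⟨n' + (k + 1) * r', by rw [hn', hr']; ring⟩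
    · obtain ⟨s', hs'⟩ := hd
      have hrk : Odd (r * k) := ⟨s' * n - 1, by linear_combination -h + n * hs'⟩
      obtain ⟨hro, hko⟩ := Int.odd_mul.mp hrk
      obtain ⟨r', hr'⟩ := hro
      obtain ⟨k', hk'⟩ := hko
      refine ⟨_, hmem (n + 1), ?_⟩
      exact Odd.mul ⟨k' + (n + 1) * s', by rw [hk', hs']; ring⟩
        ⟨n + r' * (n + 1), by rw [hr']; ring⟩
  obtain ⟨m, hmI, j, hj⟩ := hodd
  rw [Ideal.eq_top_iff_one]
  have h1 : (1 : ℤ) = m * m - (j * j + j) * 4 := by rw [hj]; ring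
  rw [h1]
  exact I.sub_mem (I.mul_mem_left _ hmI) (I.mul_mem_left _ h4)
end

section
/- Let r, s be coprime odd integers and let k, n be integers with −2·k·r + n·s = 1. Define N(t) = (n + 2rt)·(k + st) for t ∈ ℤ. Then the ideal of ℤ generated by {N(t) : t ∈ ℤ} is all of ℤ. -/
/-- Let `r, s` be coprime odd integers with `−2·k·r + n·s = 1`.
Then the ideal of `ℤ` generated by `N(t) = (n+2rt)(k+st)` is all of `ℤ`. -/
theorem ideal_span_N_odd_eq_top (r s k n : ℤ) (hr : Odd r) (hs : Odd s)
    (hco : IsCoprime r s) (h : -2 * k * r + n * s = 1) :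
    Ideal.span {m : ℤ | ∃ t : ℤ, m = (n + 2 * r * t) * (k + s * t)} = ⊤ := by
  set I := Ideal.span {m : ℤ | ∃ t : ℤ, m = (n + 2 * r * t) * (k + s * t)} with hI
  rw [Ideal.eq_top_iff_one]
  have ha : (n * k : ℤ) ∈ I := by
    apply Ideal.subset_span; exact ⟨0, by ring⟩
  have hb : ((n + 2 * r) * (k + s) : ℤ) ∈ I := by
    apply Ideal.subset_span; exact ⟨1, by ring⟩
  have hc : ((n - 2 * r) * (k - s) : ℤ) ∈ I := by
    apply Ideal.subset_span; exact ⟨-1, by ring⟩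
  -- 2 is in the ideal
  have h2 : (2 : ℤ) ∈ I := by
    have hid : (2 : ℤ) = 8 * n * k * (n * k)
        + (2 * n * s - 1 - 4 * n * k) * ((n + 2 * r) * (k + s))
        + (1 - 2 * n * s - 4 * n * k) * ((n - 2 * r) * (k - s)) := by
      linear_combination (-4 * n * s - 2) * h
    rw [hid]
    exact I.add_mem (I.add_mem (I.mul_mem_left _ ha) (I.mul_mem_left _ hb))
      (I.mul_mem_left _ hc)
  -- n is odd
  have hns : Odd (n * s) := ⟨k * r, by linarith⟩
  have hn : Odd n := by
    rcases Int.even_or_odd n with he | ho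
    · exact absurd hns (Int.not_odd_iff_even.mpr (he.mul_right s))
    · exact ho
  -- an odd element of the ideal
  have hodd : ∃ x ∈ I, Odd x := by
    rcases Int.even_or_odd k with he | ho
    · refine ⟨(n + 2 * r) * (k + s), hb, ?_⟩
      rcases hn with ⟨a, hA⟩; rcases hs with ⟨b', hB⟩; rcases he with ⟨c', hC⟩
      exact ⟨2*a*c' + 2*a*b' + a + 2*r*c' + 2*r*b' + r + c' + b', by subst hA hB hC; ring⟩
    · refine ⟨n * k, ha, hn.mul ho⟩
  obtain ⟨x, hx, m, hm⟩ := hodd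
  have h1 : (1 : ℤ) = x - m * 2 := by omega
  rw [h1]
  exact I.sub_mem hx (I.mul_mem_left m h2)
end

section
/- Let R = ℂ[X^{±1}, y, z], let σ be the ℂ-algebra automorphism of R with σ(X)=X⁻¹, σ(y)=y, σ(z)=z, and let δ be the σ-derivation of R determined by δ(X)=2z, δ(X⁻¹)=−2z, δ(y)=δ(z)=0. Then for every k ∈ ℤ, δ(X^k) = 2z·U_{k−1}(x), where x = (X+X⁻¹)/2 and U denotes the Chebyshev polynomial of the second kind (with U_{−1}=0 and U_{−1−m}(x) = −U_{m−1}(x)). -/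
/-!
Write `e k` for the defect of an identity indexed by `k ∈ ℤ`. Both the Chebyshev identity
`U_k(x) = X^{-k} + X U_{k-1}(x)` and the claimed formula `δ(X^k) = δ(X) U_{k-1}(x)` have defects
with `e (k + 1) = c * e k` for a unit `c` (`X⁻¹`, resp. `X`) and `e 0 = 0`, so they vanish on all
of `ℤ`. For `δ` the recurrence is the Leibniz rule `δ(X^{k+1}) = X^{-k} δ(X) + δ(X^k) X`, combined
with the Chebyshev identity.
-/

open Polynomial Polynomial.Chebyshev

/-- `R = ℂ[X^{±1}, y, z]`, realized as Laurent polynomials in `X` over `ℂ[y, z]`. -/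
noncomputable abbrev BHRing : Type := LaurentPolynomial (MvPolynomial (Fin 2) ℂ)

/-- The generator `X` of `R = ℂ[X^{±1}, y, z]`. -/
noncomputable abbrev BHX : BHRing := LaurentPolynomial.T 1

/-- The generator `y` of `R = ℂ[X^{±1}, y, z]`. -/
noncomputable abbrev BHy : BHRing := LaurentPolynomial.C (MvPolynomial.X 0)

/-- The generator `z` of `R = ℂ[X^{±1}, y, z]`. -/
noncomputable abbrev BHz : BHRing := LaurentPolynomial.C (MvPolynomial.X 1)

theorem Int.eq_zero_of_add_one_eq_units_mul {M₀ : Type*} [MonoidWithZero M₀] {f : ℤ → M₀}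
    (c : M₀ˣ) (h0 : f 0 = 0) (hf : ∀ k, f (k + 1) = c * f k) (k : ℤ) : f k = 0 := by
  induction k using Int.induction_on with
  | zero => exact h0
  | succ n ih => rw [hf, ih, mul_zero]
  | pred n ih => rwa [← c.mul_right_eq_zero, ← hf, sub_add_cancel]

section

variable {R : Type*} [CommRing R]

theorem Polynomial.Chebyshev.eval_U_of_two_mul_eq_add_inv {x : R} {u : Rˣ}
    (hx : 2 * x = u + ↑u⁻¹) (k : ℤ) :
    (U R k).eval x = ↑(u ^ (-k)) + u * (U R (k - 1)).eval x := by
  rw [← sub_eq_zero, ← sub_sub]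
  refine Int.eq_zero_of_add_one_eq_units_mul (f := fun k ↦
    (U R k).eval x - ↑(u ^ (-k)) - u * (U R (k - 1)).eval x) u⁻¹ (by simp) (fun k ↦ ?_) k
  simp only [U_add_one, eval_sub, eval_mul, eval_ofNat, eval_X, hx, add_sub_cancel_right,
    neg_add', zpow_sub_one, Units.val_mul]
  linear_combination (U R (k - 1)).eval x * u.inv_mul

theorem map_units_zpow_of_map_eq_inv {F : Type*} [FunLike F R R] [MonoidHomClass F R R]
    {σ : F} {u : Rˣ} (hσ : σ u = ↑u⁻¹) (k : ℤ) : σ ↑(u ^ k) = ↑(u ^ (-k)) := by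
  have hu : Units.map (σ : R →* R) u = u⁻¹ := Units.ext hσ
  rw [← MonoidHom.coe_coe σ, ← Units.coe_map, map_zpow, hu, inv_zpow']

theorem sigma_derivation_units_zpow {F : Type*} [FunLike F R R] [MonoidHomClass F R R]
    {σ : F} {δ : R → R} (hδ : ∀ a b, δ (a * b) = σ a * δ b + δ a * b)
    {x : R} {u : Rˣ} (hσ : σ u = ↑u⁻¹) (hx : 2 * x = u + ↑u⁻¹) (k : ℤ) :
    δ ↑(u ^ k) = δ u * (U R (k - 1)).eval x := by
  rw [← sub_eq_zero]
  refine Int.eq_zero_of_add_one_eq_units_mul (f := fun k ↦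
    δ ↑(u ^ k) - δ u * (U R (k - 1)).eval x) u ?_ (fun k ↦ ?_) k
  · have hδ_one : δ 1 = 0 := by simpa using hδ 1 1
    simp [hδ_one]
  · simp only [zpow_add_one, Units.val_mul, hδ, map_units_zpow_of_map_eq_inv hσ,
      add_sub_cancel_right, eval_U_of_two_mul_eq_add_inv hx k]
    ring

end

theorem LaurentPolynomial.isUnit_T_one_unit_zpow {R : Type*} [Semiring R] (k : ℤ) :
    (((isUnit_T 1).unit ^ k : (LaurentPolynomial R)ˣ) : LaurentPolynomial R) = T k := by
  induction k using Int.induction_on with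
  | zero => simp
  | succ n ih => rw [zpow_add_one, Units.val_mul, ih, IsUnit.unit_spec, T_add]
  | pred n ih =>
    rw [zpow_sub_one, Units.val_mul, ih, Units.inv_eq_of_mul_eq_one_right (a := T (-1)), ← T_sub]
    rw [IsUnit.unit_spec, ← T_add, add_neg_cancel, T_zero]

theorem sigma_derivation_of_laurent_power_general
    (σ : BHRing ≃ₐ[ℂ] BHRing)
    (hσX : σ BHX = LaurentPolynomial.T (-1))
    (δ : BHRing →ₗ[ℂ] BHRing)
    (hLeib : ∀ a b : BHRing, δ (a * b) = σ a * δ b + δ a * b)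
    (hδX : δ BHX = 2 * BHz)
    (x : BHRing) (hx : 2 * x = BHX + LaurentPolynomial.T (-1)) :
    ∀ k : ℤ, δ (LaurentPolynomial.T k) = 2 * BHz * aeval x (U ℂ (k - 1)) := by
  set u := (LaurentPolynomial.isUnit_T (R := MvPolynomial (Fin 2) ℂ) 1).unit
  have hu : (u : BHRing) = BHX := IsUnit.unit_spec _
  have hu_inv : (↑u⁻¹ : BHRing) = LaurentPolynomial.T (-1) := by
    rw [← zpow_neg_one, LaurentPolynomial.isUnit_T_one_unit_zpow]
  intro k
  rw [← LaurentPolynomial.isUnit_T_one_unit_zpow k, aeval_U,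
    sigma_derivation_units_zpow hLeib (by rw [hu, hu_inv, hσX]) (by rw [hu, hu_inv, hx]), hu, hδX]

/-- Let `R = ℂ[X^{±1}, y, z]`, let `σ` be the `ℂ`-algebra automorphism with
`σ(X) = X⁻¹`, `σ(y) = y`, `σ(z) = z`, and let `δ` be the `σ`-derivation
(`δ(ab) = σ(a)δ(b) + δ(a)b`) determined by `δ(X) = 2z`, `δ(X⁻¹) = −2z`,
`δ(y) = δ(z) = 0`.  Then for every `k ∈ ℤ`, `δ(X^k) = 2z·U_{k−1}(x)`, where
`x = (X + X⁻¹)/2` and `U` is the Chebyshev polynomial of the second kind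
(indexed by `ℤ`, so that `U_{−1} = 0` and `U_{−1−m} = −U_{m−1}`). -/
theorem sigma_derivation_of_laurent_power
    (σ : BHRing ≃ₐ[ℂ] BHRing)
    (hσX : σ BHX = LaurentPolynomial.T (-1))
    (hσy : σ BHy = BHy) (hσz : σ BHz = BHz)
    (δ : BHRing →ₗ[ℂ] BHRing)
    (hLeib : ∀ a b : BHRing, δ (a * b) = σ a * δ b + δ a * b)
    (hδX : δ BHX = 2 * BHz)
    (hδXinv : δ (LaurentPolynomial.T (-1)) = -(2 * BHz))
    (hδy : δ BHy = 0) (hδz : δ BHz = 0)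
    (x : BHRing) (hx : 2 * x = BHX + LaurentPolynomial.T (-1)) :
    ∀ k : ℤ, δ (LaurentPolynomial.T k) = 2 * BHz * aeval x (U ℂ (k - 1)) :=
  sigma_derivation_of_laurent_power_general σ hσX δ hLeib hδX x hx
end

section
/- Let H be a ring containing elements X (a unit), Y (a unit), and a subring H⁺ such that Y and Y⁻¹ commute appropriately, with δ := X − X⁻¹. Then the following are equivalent: (1) Y − Y⁻¹ ∈ H⁺·δ; (2) Y ∈ H⁺[X^{±1}], where H⁺[X^{±1}] denotes the subring generated by H⁺ and X^{±1}, assuming H⁺[X^{±1}] = H⁺ + H⁺·δ and that the anti-involution σ with σ(g)=g⁻¹ on group elements fixes H⁺ pointwise, sends δ to −δ, sends Y to Y⁻¹, and δ commutes with elements of H⁺. -/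
open MulOpposite

/-- Abstract Brumfiel–Hilden setting: `H` is a `ℚ`-algebra with an anti-homomorphism `σ`
(encoded as a ring hom `H →+* Hᵐᵒᵖ`) fixing the subalgebra `H⁺` pointwise, units `X, Y`
with `σ(X) = X⁻¹`, `σ(Y) = Y⁻¹`, `δ := X − X⁻¹` commuting with `H⁺`,
`Y + Y⁻¹ ∈ H⁺`, and the subring `H⁺[X^{±1}]` generated by `H⁺` and `X^{±1}`
decomposing as `H⁺ + H⁺·δ`.  Then the following are equivalent:
(1) `Y − Y⁻¹ ∈ H⁺·δ`;  (2) `Y ∈ H⁺[X^{±1}]`. -/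
theorem BH_longitude_conditions_equiv
    {H : Type*} [Ring H] [Algebra ℚ H] (Hp : Subalgebra ℚ H)
    (σ : H →+* Hᵐᵒᵖ) (X Y : Hˣ)
    (hσHp : ∀ h ∈ Hp, σ h = op h)
    (hσX : σ (X : H) = op (↑X⁻¹ : H))
    (hσY : σ (Y : H) = op (↑Y⁻¹ : H))
    (hcomm : ∀ h ∈ Hp, Commute h ((X : H) - (↑X⁻¹ : H)))
    (hYtr : (Y : H) + (↑Y⁻¹ : H) ∈ Hp)
    (hdecomp : ∀ a ∈ Algebra.adjoin ℚ ((Hp : Set H) ∪ {(X : H), (↑X⁻¹ : H)}),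
      ∃ h₁ ∈ Hp, ∃ h₂ ∈ Hp, a = h₁ + h₂ * ((X : H) - (↑X⁻¹ : H))) :
    (∃ h ∈ Hp, (Y : H) - (↑Y⁻¹ : H) = h * ((X : H) - (↑X⁻¹ : H))) ↔
      (Y : H) ∈ Algebra.adjoin ℚ ((Hp : Set H) ∪ {(X : H), (↑X⁻¹ : H)}) := by
  constructor
  · rintro ⟨h, hh, hY⟩
    set S : Set H := (Hp : Set H) ∪ {(X : H), (↑X⁻¹ : H)} with hS
    have hXmem : (X : H) ∈ Algebra.adjoin ℚ S :=
      Algebra.subset_adjoin (by simp [hS])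
    have hXimem : (↑X⁻¹ : H) ∈ Algebra.adjoin ℚ S :=
      Algebra.subset_adjoin (by simp [hS])
    have hHpmem : ∀ x ∈ Hp, x ∈ Algebra.adjoin ℚ S :=
      fun x hx => Algebra.subset_adjoin (Or.inl hx)
    have key : (Y : H) = (2:ℚ)⁻¹ • (((Y:H) + (↑Y⁻¹:H)) + h * ((X : H) - (↑X⁻¹ : H))) := by
      rw [← hY]
      have : ((Y:H) + (↑Y⁻¹:H)) + ((Y:H) - (↑Y⁻¹:H)) = (2:ℚ) • (Y:H) := by
        rw [two_smul]; abel
      rw [this, smul_smul]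
      norm_num
    rw [key]
    exact Subalgebra.smul_mem _
      (add_mem (hHpmem _ hYtr)
        (mul_mem (hHpmem _ hh) (sub_mem hXmem hXimem))) _
  · intro hmem
    obtain ⟨h₁, hh₁, h₂, hh₂, hY⟩ := hdecomp _ hmem
    -- σ(X⁻¹) = op X
    have hσXi : σ (↑X⁻¹ : H) = op (X : H) := by
      have e1 : σ ((X : H) * (↑X⁻¹ : H)) = 1 := by
        rw [Units.mul_inv]; exact map_one σ
      rw [map_mul, hσX] at e1
      have e2 : unop (σ (↑X⁻¹ : H)) * (↑X⁻¹ : H) = 1 := by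
        have := congrArg unop e1
        simpa using this
      have : unop (σ (↑X⁻¹ : H)) = (X : H) := by
        calc unop (σ (↑X⁻¹ : H))
            = unop (σ (↑X⁻¹ : H)) * ((↑X⁻¹ : H) * (X : H)) := by
              rw [Units.inv_mul, mul_one]
          _ = (unop (σ (↑X⁻¹ : H)) * (↑X⁻¹ : H)) * (X : H) := by rw [mul_assoc]
          _ = (X : H) := by rw [e2, one_mul]
      have := congrArg op this
      simpa using this
    have hσδ : σ ((X : H) - (↑X⁻¹ : H)) = op (-(((X : H) - (↑X⁻¹ : H)))) := by
      rw [map_sub, hσX, hσXi]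
      simp [op_sub]
    have hσYval : σ (Y : H) = op (h₁ - h₂ * ((X : H) - (↑X⁻¹ : H))) := by
      rw [hY, map_add, map_mul, hσHp _ hh₁, hσHp _ hh₂, hσδ]
      have hc := (hcomm _ hh₂).eq
      rw [← op_mul, ← op_add]
      congr 1
      rw [neg_mul, ← hc]
      abel
    have hYinv : (↑Y⁻¹ : H) = h₁ - h₂ * ((X : H) - (↑X⁻¹ : H)) := by
      have := hσY.symm.trans hσYval
      exact op_injective this
    refine ⟨h₂ + h₂, add_mem hh₂ hh₂, ?_⟩
    rw [hY, hYinv, add_mul]; abel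
end
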